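/- Under the stated setup, let Λ = {λ ∈ ℝ^n : Z_λ finite} and let (λ^{(k)}) be a sequence in Λ generated by iterative maximization, λ^{(k+1)} = M(λ^{(k)}) = γ̂^{(k)} + λ^{(k)} where γ̂^{(k)} globally maximizes γ ↦ A(γ, λ^{(k)}). Assume A and L are continuous in their arguments on Λ, and assume for every λ ∈ Λ and direction γ that d/dt A(tγ, λ)|_{t=0} and d/dt L(λ + tγ)|_{t=0} exist and are equal. Then every limit point λ̄ ∈ Λ of (λ^{(k)}) is a fixed point of M (γ = 0 maximizes A(·, λ̄)) and a critical point of L (all directional derivatives of L at λ̄ vanish). -/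

import Mathlib

/- Common setup: log-linear models over proof trees (complete data X) and
   queries (incomplete data Y). -/

variable {X Y : Type*}

/-- `ν_#(x) = ∑ i, ν_i(x)`. -/
def nuSharp {n : ℕ} (ν : Fin n → X → ℕ) (x : X) : ℕ := ∑ i, ν i x

/-- weighted property sum `λ·ν(x)`. -/
noncomputable def wdot {n : ℕ} (l : Fin n → ℝ) (ν : Fin n → X → ℕ) (x : X) : ℝ :=
  ∑ i, l i * (ν i x : ℝ)

/-- normalizing constant `Z_λ`. -/
noncomputable def Zpart (p0 : X → ℝ) {n : ℕ} (ν : Fin n → X → ℕ) (l : Fin n → ℝ) : ℝ :=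
  ∑' x : X, Real.exp (wdot l ν x) * p0 x

/-- log-linear distribution `p_λ(x)`. -/
noncomputable def pLL (p0 : X → ℝ) {n : ℕ} (ν : Fin n → X → ℕ) (l : Fin n → ℝ) (x : X) : ℝ :=
  (Zpart p0 ν l)⁻¹ * Real.exp (wdot l ν x) * p0 x

/-- incomplete-data probability `p_λ(y) = ∑_{x ∈ X(y)} p_λ(x)`. -/
noncomputable def pLLY (Yf : X → Y) (p0 : X → ℝ) {n : ℕ} (ν : Fin n → X → ℕ)
    (l : Fin n → ℝ) (y : Y) : ℝ :=
  ∑' x : {x : X // Yf x = y}, pLL p0 ν l x.1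

/-- incomplete-data log-likelihood `L(λ) = ∑_{y ∈ 𝒴} ln p_λ(y)`. -/
noncomputable def LL (Yf : X → Y) (p0 : X → ℝ) {n : ℕ} (ν : Fin n → X → ℕ)
    (𝒴 : Multiset Y) (l : Fin n → ℝ) : ℝ :=
  (𝒴.map fun y => Real.log (pLLY Yf p0 ν l y)).sum

/-- expectation `p_λ[f]`. -/
noncomputable def pExp (p0 : X → ℝ) {n : ℕ} (ν : Fin n → X → ℕ) (l : Fin n → ℝ)
    (f : X → ℝ) : ℝ :=
  ∑' x : X, pLL p0 ν l x * f x

/-- conditional expectation `k_λ[f]` given observed `y`. -/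
noncomputable def kExp (Yf : X → Y) (p0 : X → ℝ) {n : ℕ} (ν : Fin n → X → ℕ)
    (l : Fin n → ℝ) (y : Y) (f : X → ℝ) : ℝ :=
  ∑' x : {x : X // Yf x = y}, (pLL p0 ν l x.1 / pLLY Yf p0 ν l y) * f x.1

/-- auxiliary function
`A(γ,λ) = ∑_{y∈𝒴} (1 + k_λ[γ·ν] − p_λ[∑ i, ν̄_i e^{γ_i ν_#}])`. -/
noncomputable def Aaux (Yf : X → Y) (p0 : X → ℝ) {n : ℕ} (ν : Fin n → X → ℕ)
    (𝒴 : Multiset Y) (γ l : Fin n → ℝ) : ℝ :=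
  (𝒴.map fun y =>
    1 + kExp Yf p0 ν l y (fun x => wdot γ ν x)
      - pExp p0 ν l (fun x =>
          ∑ i, ((ν i x : ℝ) / (nuSharp ν x : ℝ)) * Real.exp (γ i * (nuSharp ν x : ℝ)))).sum

/-! The auxiliary function minorizes the gain in likelihood: `A(γ, λ) ≤ L(λ + γ) - L(λ)`, with
`A(0, λ) = 0`. Hence `L` increases along the iteration and converges, and the gains
`L(λ^{(k+1)}) - L(λ^{(k)}) ≥ A(γ, λ^{(k)})` tend to zero, so by continuity
`A(γ, λ̄) ≤ 0 = A(0, λ̄)`. Then `t ↦ A(tγ, λ̄)` is maximal at `0`, and its derivative there, which is that of `L` at `λ̄` in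
direction `γ`, vanishes. -/

open Filter Topology

section IterativeMaximization

variable {E : Type*} [Add E] {A : E → E → ℝ} {L : E → ℝ} {Λ : Set E}
  {seq γh : ℕ → E}

lemma le_sub_of_maximizing_step (hkey : ∀ l ∈ Λ, ∀ γ, γ + l ∈ Λ → A γ l ≤ L (γ + l) - L l)
    (hseq : ∀ k, seq k ∈ Λ) (hstep : ∀ k, seq (k + 1) = γh k + seq k)
    (hmax : ∀ k γ, A γ (seq k) ≤ A (γh k) (seq k)) (k : ℕ) (γ : E) :
    A γ (seq k) ≤ L (seq (k + 1)) - L (seq k) := by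
  have hnext := hseq (k + 1)
  rw [hstep k] at hnext ⊢
  exact (hmax k γ).trans (hkey _ (hseq k) _ hnext)

lemma monotone_comp_of_maximizing_step [Zero E]
    (hkey : ∀ l ∈ Λ, ∀ γ, γ + l ∈ Λ → A γ l ≤ L (γ + l) - L l)
    (hA0 : ∀ l ∈ Λ, A 0 l = 0) (hseq : ∀ k, seq k ∈ Λ) (hstep : ∀ k, seq (k + 1) = γh k + seq k)
    (hmax : ∀ k γ, A γ (seq k) ≤ A (γh k) (seq k)) :
    Monotone (L ∘ seq) := by
  refine monotone_nat_of_le_succ fun k => ?_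
  have := le_sub_of_maximizing_step hkey hseq hstep hmax k 0
  rw [hA0 _ (hseq k)] at this
  simpa using this

lemma le_zero_at_limit_point [Zero E] [TopologicalSpace E]
    (hkey : ∀ l ∈ Λ, ∀ γ, γ + l ∈ Λ → A γ l ≤ L (γ + l) - L l)
    (hA0 : ∀ l ∈ Λ, A 0 l = 0) (hseq : ∀ k, seq k ∈ Λ) (hstep : ∀ k, seq (k + 1) = γh k + seq k)
    (hmax : ∀ k γ, A γ (seq k) ≤ A (γh k) (seq k))
    (hAcont : ContinuousOn (fun p : E × E => A p.1 p.2) (Set.univ ×ˢ Λ))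
    (hLcont : ContinuousOn L Λ) {lbar : E} (hlbar : lbar ∈ Λ) {φ : ℕ → ℕ} (hφ : StrictMono φ)
    (hlim : Tendsto (seq ∘ φ) atTop (𝓝 lbar)) (γ : E) :
    A γ lbar ≤ 0 := by
  have hlimΛ : Tendsto (seq ∘ φ) atTop (𝓝[Λ] lbar) :=
    tendsto_nhdsWithin_iff.2 ⟨hlim, .of_forall fun k => hseq (φ k)⟩
  have hL : Tendsto (L ∘ seq) atTop (𝓝 (L lbar)) :=
    (tendsto_iff_tendsto_subseq_of_monotone
      (monotone_comp_of_maximizing_step hkey hA0 hseq hstep hmax) hφ.tendsto_atTop).2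
      ((hLcont lbar hlbar).tendsto.comp hlimΛ)
  have hgain : Tendsto (fun k => L (seq (φ k + 1)) - L (seq (φ k))) atTop (𝓝 0) := by
    have hnext := hL.comp ((tendsto_add_atTop_nat 1).comp hφ.tendsto_atTop)
    simpa using hnext.sub (hL.comp hφ.tendsto_atTop)
  have hA : Tendsto (fun k => A γ (seq (φ k))) atTop (𝓝 (A γ lbar)) :=
    (hAcont (γ, lbar) ⟨trivial, hlbar⟩).tendsto.comp <| tendsto_nhdsWithin_iff.2
      ⟨tendsto_const_nhds.prodMk_nhds hlim, .of_forall fun k => ⟨trivial, hseq (φ k)⟩⟩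
  exact le_of_tendsto_of_tendsto hA hgain
    (.of_forall fun k => le_sub_of_maximizing_step hkey hseq hstep hmax (φ k) γ)

end IterativeMaximization

lemma tsum_mul_le_log_tsum_mul_exp {ι : Type*} {w f : ι → ℝ} (hw : ∀ i, 0 ≤ w i)
    (hw1 : ∑' i, w i = 1) (hwf : Summable fun i => w i * f i)
    (hwe : Summable fun i => w i * Real.exp (f i)) :
    ∑' i, w i * f i ≤ Real.log (∑' i, w i * Real.exp (f i)) := by
  set c := ∑' i, w i * Real.exp (f i)
  have hws : Summable w := by
    by_contra h
    rw [tsum_eq_zero_of_not_summable h] at hw1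
    exact zero_ne_one hw1
  obtain ⟨i, hi⟩ : ∃ i, 0 < w i := by
    by_contra! h
    rw [tsum_congr fun i => le_antisymm (h i) (hw i), tsum_zero] at hw1
    exact zero_ne_one hw1
  have hc : 0 < c :=
    hwe.tsum_pos (fun i => mul_nonneg (hw i) (Real.exp_pos _).le) i (mul_pos hi (Real.exp_pos _))
  -- `t ≤ log c + e^t / c - 1` is `1 + s ≤ e^s` at `s = t - log c`
  have hpt : ∀ i, w i * f i ≤ w i * Real.log c + w i * Real.exp (f i) / c - w i := fun i => by
    have h := Real.add_one_le_exp (f i - Real.log c)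
    rw [Real.exp_sub, Real.exp_log hc] at h
    linarith [mul_le_mul_of_nonneg_left h (hw i), mul_div_assoc (w i) (Real.exp (f i)) c]
  have hrhs := ((hws.mul_right (Real.log c)).add (hwe.div_const c)).sub hws
  calc ∑' i, w i * f i
      ≤ ∑' i, (w i * Real.log c + w i * Real.exp (f i) / c - w i) := hwf.tsum_le_tsum hpt hrhs
    _ = Real.log c := by
      rw [(hws.mul_right _ |>.add (hwe.div_const c)).tsum_sub hws,
        (hws.mul_right _).tsum_add (hwe.div_const c), tsum_mul_right, tsum_div_const, hw1,
        div_self hc.ne']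
      ring

section LogLinear

variable {n : ℕ} {p0 : X → ℝ} {ν : Fin n → X → ℕ}

lemma wdot_add (γ l : Fin n → ℝ) (x : X) :
    wdot (γ + l) ν x = wdot γ ν x + wdot l ν x := by
  simp [wdot, add_mul, Finset.sum_add_distrib]

lemma sum_nuBar_eq_one (hν : ∀ x, 1 ≤ nuSharp ν x) (x : X) :
    ∑ i, (ν i x : ℝ) / nuSharp ν x = 1 := by
  have : (0 : ℝ) < nuSharp ν x := by exact_mod_cast hν x
  rw [← Finset.sum_div, div_eq_one_iff_eq this.ne']
  push_cast [nuSharp]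
  rfl

/-- Jensen: `γ·ν(x) = ∑ i, ν̄_i(x) (γ_i ν_#(x))` is a convex combination. -/
lemma exp_wdot_le_sum_nuBar_mul_exp (hν : ∀ x, 1 ≤ nuSharp ν x) (γ : Fin n → ℝ) (x : X) :
    Real.exp (wdot γ ν x) ≤
      ∑ i, ((ν i x : ℝ) / nuSharp ν x) * Real.exp (γ i * nuSharp ν x) := by
  have hs : (0 : ℝ) < nuSharp ν x := by exact_mod_cast hν x
  have hconv := convexOn_exp.map_sum_le (t := Finset.univ) (p := fun i => γ i * nuSharp ν x)
    (fun i _ => by positivity) (sum_nuBar_eq_one hν x) (fun i _ => Set.mem_univ _)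
  have harg : ∑ i, ((ν i x : ℝ) / nuSharp ν x) • (γ i * nuSharp ν x) = wdot γ ν x :=
    Finset.sum_congr rfl fun i _ => by rw [smul_eq_mul]; field_simp
  rw [harg] at hconv
  simpa using hconv

lemma Zpart_nonneg (hp0 : ∀ x, 0 ≤ p0 x) (l : Fin n → ℝ) : 0 ≤ Zpart p0 ν l :=
  tsum_nonneg fun x => mul_nonneg (Real.exp_pos _).le (hp0 x)

lemma pLL_nonneg (hp0 : ∀ x, 0 ≤ p0 x) (l : Fin n → ℝ) (x : X) : 0 ≤ pLL p0 ν l x :=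
  mul_nonneg (mul_nonneg (inv_nonneg.2 (Zpart_nonneg hp0 l)) (Real.exp_pos _).le) (hp0 x)

lemma Zpart_pos_of_pLLY_pos (Yf : X → Y) (hp0 : ∀ x, 0 ≤ p0 x) {l : Fin n → ℝ} {y : Y}
    (hy : 0 < pLLY Yf p0 ν l y) : 0 < Zpart p0 ν l := by
  refine (Zpart_nonneg hp0 l).lt_of_ne fun hZ => hy.ne' ?_
  simp [pLLY, pLL, ← hZ]

lemma tsum_pLL {l : Fin n → ℝ} (hZ : Zpart p0 ν l ≠ 0) : ∑' x, pLL p0 ν l x = 1 := by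
  simp only [pLL, mul_assoc, tsum_mul_left]
  exact inv_mul_cancel₀ hZ

lemma summable_pLL {l : Fin n → ℝ} (hl : Summable fun x => Real.exp (wdot l ν x) * p0 x) :
    Summable (pLL p0 ν l) :=
  (hl.mul_left (Zpart p0 ν l)⁻¹).congr fun x => by simp [pLL, mul_assoc]

lemma pLL_mul_exp_wdot {l : Fin n → ℝ} (γ : Fin n → ℝ) (hZ' : Zpart p0 ν (γ + l) ≠ 0) (x : X) :
    pLL p0 ν l x * Real.exp (wdot γ ν x)
      = Zpart p0 ν (γ + l) / Zpart p0 ν l * pLL p0 ν (γ + l) x := by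
  simp only [pLL, wdot_add, Real.exp_add]
  field_simp

/-- The complete-data part of the bound: `k_λ[γ·ν] ≤ ln k_λ[e^{γ·ν}]` by Jensen, and
`k_λ[e^{γ·ν}] = (Z_{λ+γ} / Z_λ) · p_{λ+γ}(y) / p_λ(y)`. -/
lemma kExp_wdot_le (Yf : X → Y) (hp0 : ∀ x, 0 ≤ p0 x) {l : Fin n → ℝ} (γ : Fin n → ℝ) {y : Y}
    (hl' : Summable fun x => Real.exp (wdot (γ + l) ν x) * p0 x)
    (hy : 0 < pLLY Yf p0 ν l y) (hy' : 0 < pLLY Yf p0 ν (γ + l) y)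
    (hk : Summable fun x : {x : X // Yf x = y} =>
      (pLL p0 ν l x.1 / pLLY Yf p0 ν l y) * wdot γ ν x.1) :
    kExp Yf p0 ν l y (fun x => wdot γ ν x) ≤
      Real.log (Zpart p0 ν (γ + l) / Zpart p0 ν l)
        + Real.log (pLLY Yf p0 ν (γ + l) y) - Real.log (pLLY Yf p0 ν l y) := by
  have hZ := Zpart_pos_of_pLLY_pos Yf hp0 hy
  have hZ' := Zpart_pos_of_pLLY_pos Yf hp0 hy'
  have hfiber : ∀ x : {x : X // Yf x = y},
      pLL p0 ν l x.1 / pLLY Yf p0 ν l y * Real.exp (wdot γ ν x.1)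
        = Zpart p0 ν (γ + l) / Zpart p0 ν l / pLLY Yf p0 ν l y * pLL p0 ν (γ + l) x.1 :=
    fun x => by rw [div_mul_eq_mul_div, pLL_mul_exp_wdot γ hZ'.ne']; ring
  have hjensen := tsum_mul_le_log_tsum_mul_exp
    (w := fun x : {x : X // Yf x = y} => pLL p0 ν l x.1 / pLLY Yf p0 ν l y)
    (f := fun x => wdot γ ν x.1) (fun x => div_nonneg (pLL_nonneg hp0 l x.1) hy.le)
    (by rw [tsum_div_const]; exact div_self hy.ne') hk
    (((summable_pLL hl').subtype {x | Yf x = y}).mul_left _ |>.congr fun x => (hfiber x).symm)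
  rw [tsum_congr hfiber, tsum_mul_left] at hjensen
  have hval : Zpart p0 ν (γ + l) / Zpart p0 ν l / pLLY Yf p0 ν l y
        * ∑' x : {x : X // Yf x = y}, pLL p0 ν (γ + l) x.1
      = Zpart p0 ν (γ + l) / Zpart p0 ν l * (pLLY Yf p0 ν (γ + l) y / pLLY Yf p0 ν l y) := by
    rw [← pLLY]; ring
  rw [hval, Real.log_mul (by positivity) (by positivity), Real.log_div hy'.ne' hy.ne'] at hjensen
  rw [kExp]
  linarith

/-- The normalization part of the bound: `ln (Z_{λ+γ} / Z_λ) ≤ Z_{λ+γ} / Z_λ - 1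
= p_λ[e^{γ·ν}] - 1`, and `e^{γ·ν} ≤ ∑ i, ν̄_i e^{γ_i ν_#}`. -/
lemma log_Zpart_div_le (hp0 : ∀ x, 0 ≤ p0 x) (hν : ∀ x, 1 ≤ nuSharp ν x) {l : Fin n → ℝ}
    (γ : Fin n → ℝ) (hZ : 0 < Zpart p0 ν l) (hZ' : 0 < Zpart p0 ν (γ + l))
    (hl' : Summable fun x => Real.exp (wdot (γ + l) ν x) * p0 x)
    (hp : Summable fun x => pLL p0 ν l x *
      ∑ i, ((ν i x : ℝ) / nuSharp ν x) * Real.exp (γ i * nuSharp ν x)) :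
    Real.log (Zpart p0 ν (γ + l) / Zpart p0 ν l) ≤
      pExp p0 ν l (fun x => ∑ i, ((ν i x : ℝ) / nuSharp ν x) * Real.exp (γ i * nuSharp ν x))
        - 1 := by
  have hratio : ∑' x, pLL p0 ν l x * Real.exp (wdot γ ν x)
      = Zpart p0 ν (γ + l) / Zpart p0 ν l := by
    rw [tsum_congr (pLL_mul_exp_wdot γ hZ'.ne'), tsum_mul_left, tsum_pLL hZ'.ne', mul_one]
  have hle : Zpart p0 ν (γ + l) / Zpart p0 ν l ≤
      pExp p0 ν l (fun x => ∑ i, ((ν i x : ℝ) / nuSharp ν x) * Real.exp (γ i * nuSharp ν x)) := by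
    rw [← hratio]
    refine Summable.tsum_le_tsum (fun x => ?_)
      ((summable_pLL hl').mul_left _ |>.congr fun x => (pLL_mul_exp_wdot γ hZ'.ne' x).symm) hp
    exact mul_le_mul_of_nonneg_left (exp_wdot_le_sum_nuBar_mul_exp hν γ x) (pLL_nonneg hp0 l x)
  linarith [Real.log_le_sub_one_of_pos (div_pos hZ' hZ)]

lemma Aaux_le_LL_sub (Yf : X → Y) (hp0 : ∀ x, 0 ≤ p0 x) (hν : ∀ x, 1 ≤ nuSharp ν x)
    (𝒴 : Multiset Y) {l : Fin n → ℝ} (γ : Fin n → ℝ)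
    (hl' : Summable fun x => Real.exp (wdot (γ + l) ν x) * p0 x)
    (hy : ∀ y ∈ 𝒴, 0 < pLLY Yf p0 ν l y) (hy' : ∀ y ∈ 𝒴, 0 < pLLY Yf p0 ν (γ + l) y)
    (hk : ∀ y ∈ 𝒴, Summable fun x : {x : X // Yf x = y} =>
      (pLL p0 ν l x.1 / pLLY Yf p0 ν l y) * wdot γ ν x.1)
    (hp : Summable fun x => pLL p0 ν l x *
      ∑ i, ((ν i x : ℝ) / nuSharp ν x) * Real.exp (γ i * nuSharp ν x)) :
    Aaux Yf p0 ν 𝒴 γ l ≤ LL Yf p0 ν 𝒴 (γ + l) - LL Yf p0 ν 𝒴 l := by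
  rw [Aaux, LL, LL, ← Multiset.sum_map_sub]
  refine Multiset.sum_map_le_sum_map _ _ fun y hy𝒴 => ?_
  have hcomplete := kExp_wdot_le Yf hp0 γ hl' (hy y hy𝒴) (hy' y hy𝒴) (hk y hy𝒴)
  have hnorm := log_Zpart_div_le hp0 hν γ (Zpart_pos_of_pLLY_pos Yf hp0 (hy y hy𝒴))
    (Zpart_pos_of_pLLY_pos Yf hp0 (hy' y hy𝒴)) hl' hp
  linarith

lemma Aaux_zero (Yf : X → Y) (hp0 : ∀ x, 0 ≤ p0 x) (hν : ∀ x, 1 ≤ nuSharp ν x)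
    (𝒴 : Multiset Y) {l : Fin n → ℝ} (hy : ∀ y ∈ 𝒴, 0 < pLLY Yf p0 ν l y) :
    Aaux Yf p0 ν 𝒴 0 l = 0 := by
  refine Multiset.sum_eq_zero fun a ha => ?_
  obtain ⟨y, hy𝒴, rfl⟩ := Multiset.mem_map.1 ha
  have hZ := Zpart_pos_of_pLLY_pos Yf hp0 (hy y hy𝒴)
  simp [kExp, pExp, wdot, sum_nuBar_eq_one hν, tsum_pLL hZ.ne']

end LogLinear

theorem im_limit_points_are_critical_general
    {X Y : Type*} (Yf : X → Y)
    (p0 : X → ℝ) (hp0 : ∀ x, 0 < p0 x)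
    {n : ℕ} (ν : Fin n → X → ℕ) (hν : ∀ x, 1 ≤ nuSharp ν x)
    (𝒴 : Multiset Y)
    (hpos : ∀ l : Fin n → ℝ, (Summable fun x : X => Real.exp (wdot l ν x) * p0 x) →
      ∀ y ∈ 𝒴, 0 < pLLY Yf p0 ν l y)
    (hksum : ∀ l γ : Fin n → ℝ, ∀ y ∈ 𝒴, Summable fun x : {x : X // Yf x = y} =>
      (pLL p0 ν l x.1 / pLLY Yf p0 ν l y) * wdot γ ν x.1)
    (hpsum : ∀ l γ : Fin n → ℝ, Summable fun x : X => pLL p0 ν l x *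
      ∑ i, ((ν i x : ℝ) / (nuSharp ν x : ℝ)) * Real.exp (γ i * (nuSharp ν x : ℝ)))
    (seq γh : ℕ → Fin n → ℝ)
    (hseqZ : ∀ k : ℕ, Summable fun x : X => Real.exp (wdot (seq k) ν x) * p0 x)
    (hstep : ∀ k : ℕ, seq (k + 1) = γh k + seq k)
    (hmax : ∀ k : ℕ, ∀ γ : Fin n → ℝ,
      Aaux Yf p0 ν 𝒴 γ (seq k) ≤ Aaux Yf p0 ν 𝒴 (γh k) (seq k))
    (hAcont : ContinuousOn
      (fun p : (Fin n → ℝ) × (Fin n → ℝ) => Aaux Yf p0 ν 𝒴 p.1 p.2)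
      (Set.univ ×ˢ {l : Fin n → ℝ | Summable fun x : X => Real.exp (wdot l ν x) * p0 x}))
    (hLcont : ContinuousOn (LL Yf p0 ν 𝒴)
      {l : Fin n → ℝ | Summable fun x : X => Real.exp (wdot l ν x) * p0 x})
    (hderiv : ∀ l : Fin n → ℝ, (Summable fun x : X => Real.exp (wdot l ν x) * p0 x) →
      ∀ γ : Fin n → ℝ, ∃ D : ℝ,
        HasDerivAt (fun t : ℝ => Aaux Yf p0 ν 𝒴 (t • γ) l) D 0 ∧
        HasDerivAt (fun t : ℝ => LL Yf p0 ν 𝒴 (l + t • γ)) D 0)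
    (lbar : Fin n → ℝ)
    (hZbar : Summable fun x : X => Real.exp (wdot lbar ν x) * p0 x)
    (φ : ℕ → ℕ) (hφ : StrictMono φ)
    (hlim : Filter.Tendsto (fun k : ℕ => seq (φ k)) Filter.atTop (nhds lbar)) :
    (∀ γ : Fin n → ℝ, Aaux Yf p0 ν 𝒴 γ lbar ≤ Aaux Yf p0 ν 𝒴 (0 : Fin n → ℝ) lbar) ∧
    (∀ γ : Fin n → ℝ, HasDerivAt (fun t : ℝ => LL Yf p0 ν 𝒴 (lbar + t • γ)) 0 0) := by
  have hp0' : ∀ x, 0 ≤ p0 x := fun x => (hp0 x).le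
  have hA0 : ∀ l, (Summable fun x => Real.exp (wdot l ν x) * p0 x) → Aaux Yf p0 ν 𝒴 0 l = 0 :=
    fun l hl => Aaux_zero Yf hp0' hν 𝒴 (hpos l hl)
  have hfixed : ∀ γ, Aaux Yf p0 ν 𝒴 γ lbar ≤ Aaux Yf p0 ν 𝒴 0 lbar := fun γ => by
    rw [hA0 lbar hZbar]
    exact le_zero_at_limit_point (L := LL Yf p0 ν 𝒴)
      (fun l hl γ hl' => Aaux_le_LL_sub Yf hp0' hν 𝒴 γ hl' (hpos l hl) (hpos _ hl')
        (hksum l γ) (hpsum l γ))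
      hA0 hseqZ hstep hmax hAcont hLcont hZbar hφ hlim γ
  refine ⟨hfixed, fun γ => ?_⟩
  obtain ⟨D, hAD, hLD⟩ := hderiv lbar hZbar γ
  have hmax0 : IsLocalMax (fun t : ℝ => Aaux Yf p0 ν 𝒴 (t • γ) lbar) 0 :=
    .of_forall fun t => by simpa using hfixed (t • γ)
  rwa [hmax0.hasDerivAt_eq_zero hAD] at hLD

/-- Theorem 6 (Convergence): every limit point of an IM sequence is a fixed
point of `M` and a critical point of `L`. -/
theorem im_limit_points_are_critical
    {X Y : Type*} [Countable X] (Yf : X → Y)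
    (p0 : X → ℝ) (hp0 : ∀ x, 0 < p0 x) (hp0sum : ∑' x : X, p0 x = 1)
    {n : ℕ} (ν : Fin n → X → ℕ) (hν : ∀ x, 1 ≤ nuSharp ν x)
    (𝒴 : Multiset Y)
    (hpos : ∀ l : Fin n → ℝ, (Summable fun x : X => Real.exp (wdot l ν x) * p0 x) →
      ∀ y ∈ 𝒴, 0 < pLLY Yf p0 ν l y)
    (hksum : ∀ l γ : Fin n → ℝ, ∀ y ∈ 𝒴, Summable fun x : {x : X // Yf x = y} =>
      (pLL p0 ν l x.1 / pLLY Yf p0 ν l y) * wdot γ ν x.1)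
    (hpsum : ∀ l γ : Fin n → ℝ, Summable fun x : X => pLL p0 ν l x *
      ∑ i, ((ν i x : ℝ) / (nuSharp ν x : ℝ)) * Real.exp (γ i * (nuSharp ν x : ℝ)))
    (seq γh : ℕ → Fin n → ℝ)
    (hseqZ : ∀ k : ℕ, Summable fun x : X => Real.exp (wdot (seq k) ν x) * p0 x)
    (hstep : ∀ k : ℕ, seq (k + 1) = γh k + seq k)
    (hmax : ∀ k : ℕ, ∀ γ : Fin n → ℝ,
      Aaux Yf p0 ν 𝒴 γ (seq k) ≤ Aaux Yf p0 ν 𝒴 (γh k) (seq k))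
    (hAcont : ContinuousOn
      (fun p : (Fin n → ℝ) × (Fin n → ℝ) => Aaux Yf p0 ν 𝒴 p.1 p.2)
      (Set.univ ×ˢ {l : Fin n → ℝ | Summable fun x : X => Real.exp (wdot l ν x) * p0 x}))
    (hLcont : ContinuousOn (LL Yf p0 ν 𝒴)
      {l : Fin n → ℝ | Summable fun x : X => Real.exp (wdot l ν x) * p0 x})
    (hderiv : ∀ l : Fin n → ℝ, (Summable fun x : X => Real.exp (wdot l ν x) * p0 x) →
      ∀ γ : Fin n → ℝ, ∃ D : ℝ,
        HasDerivAt (fun t : ℝ => Aaux Yf p0 ν 𝒴 (t • γ) l) D 0 ∧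
        HasDerivAt (fun t : ℝ => LL Yf p0 ν 𝒴 (l + t • γ)) D 0)
    (lbar : Fin n → ℝ)
    (hZbar : Summable fun x : X => Real.exp (wdot lbar ν x) * p0 x)
    (φ : ℕ → ℕ) (hφ : StrictMono φ)
    (hlim : Filter.Tendsto (fun k : ℕ => seq (φ k)) Filter.atTop (nhds lbar)) :
    (∀ γ : Fin n → ℝ, Aaux Yf p0 ν 𝒴 γ lbar ≤ Aaux Yf p0 ν 𝒴 (0 : Fin n → ℝ) lbar) ∧
    (∀ γ : Fin n → ℝ, HasDerivAt (fun t : ℝ => LL Yf p0 ν 𝒴 (lbar + t • γ)) 0 0) :=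
  im_limit_points_are_critical_general Yf p0 hp0 ν hν 𝒴 hpos hksum hpsum seq γh hseqZ hstep hmax
    hAcont hLcont hderiv lbar hZbar φ hφ hlim
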